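/- arXiv:2605.01347 — 4 statements merged into one kernel-verified Lean document; each statement's English description precedes it below -/
import Mathlib

section
/- For probability distributions p, q on a finite set with q(v) > 0 for all v, β ∈ (0,1), and m = βp + (1−β)q, we have Σ_v p(v)·q(v)/m(v) ≤ 1. -/
open Finset

theorem sum_p_q_div_mix_le_one
    {V : Type*} [Fintype V] (p q : V → ℝ) (β : ℝ)
    (hp0 : ∀ v, 0 ≤ p v) (hp1 : ∑ v, p v = 1)
    (hq0 : ∀ v, 0 < q v) (hq1 : ∑ v, q v = 1)
    (hβ : β ∈ Set.Ioo (0 : ℝ) 1) :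
    ∑ v, p v * q v / (β * p v + (1 - β) * q v) ≤ 1 := by
  obtain ⟨hβ0, hβ1⟩ := hβ
  have key : ∀ v, p v * q v / (β * p v + (1 - β) * q v) ≤ (1 - β) * p v + β * q v := by
    intro v
    have hm : 0 < β * p v + (1 - β) * q v := by
      have := hp0 v; have := hq0 v; nlinarith
    rw [div_le_iff₀ hm]
    nlinarith [mul_nonneg (mul_nonneg hβ0.le (sub_nonneg.mpr hβ1.le)) (sq_nonneg (p v - q v))]
  calc ∑ v, p v * q v / (β * p v + (1 - β) * q v)
      ≤ ∑ v, ((1 - β) * p v + β * q v) := Finset.sum_le_sum fun v _ => key v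
    _ = 1 := by rw [Finset.sum_add_distrib, ← Finset.mul_sum, ← Finset.mul_sum, hp1, hq1]; ring
end

section
/- For probability distributions p, q on a finite set with q strictly positive, β ∈ (0,1), and m = βp+(1−β)q: for every index i, |q(i)·log(q(i)/m(i))| ≤ log(1/(1−β)). -/
open Finset

theorem abs_q_log_q_div_m_le
    {V : Type*} [Fintype V] (p q : V → ℝ) (β : ℝ)
    (hp0 : ∀ v, 0 ≤ p v) (hp1 : ∑ v, p v = 1)
    (hq0 : ∀ v, 0 < q v) (hq1 : ∑ v, q v = 1)
    (hβ : β ∈ Set.Ioo (0 : ℝ) 1) (i : V) :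
    |q i * Real.log (q i / (β * p i + (1 - β) * q i))| ≤ Real.log (1 / (1 - β)) := by
  obtain ⟨hβ0, hβ1⟩ := hβ
  have h1β : (0:ℝ) < 1 - β := by linarith
  set m := β * p i + (1 - β) * q i with hm
  have hqi := hq0 i
  have hpi := hp0 i
  have hm0 : 0 < m := by
    have : 0 ≤ β * p i := by positivity
    nlinarith
  have hq1i : q i ≤ 1 := by
    rw [← hq1]
    exact single_le_sum (fun v _ => (hq0 v).le) (mem_univ i)
  have hp1i : p i ≤ 1 := by
    rw [← hp1]
    exact single_le_sum (fun v _ => hp0 v) (mem_univ i)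
  have hL : Real.log (1 / (1 - β)) = -Real.log (1 - β) := by
    rw [one_div, Real.log_inv]
  have hβL : β ≤ Real.log (1 / (1 - β)) := by
    have := Real.log_le_sub_one_of_pos h1β
    rw [hL]; linarith
  have hL0 : 0 ≤ Real.log (1 / (1 - β)) := by linarith
  rw [abs_le]
  constructor
  · -- lower bound
    have hlog : Real.log (q i / m) ≥ 1 - m / q i := by
      have h := Real.log_le_sub_one_of_pos (x := m / q i) (by positivity)
      rw [Real.log_div hm0.ne' hqi.ne'] at h
      rw [Real.log_div hqi.ne' hm0.ne']
      linarith
    have : q i * Real.log (q i / m) ≥ q i - m := by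
      have := mul_le_mul_of_nonneg_left hlog hqi.le
      have hqm : q i * (1 - m / q i) = q i - m := by
        field_simp
      nlinarith [mul_le_mul_of_nonneg_left hlog hqi.le]
    have hqm : q i - m = β * (q i - p i) := by ring
    nlinarith
  · -- upper bound
    have hlog : Real.log (q i / m) ≤ Real.log (1 / (1 - β)) := by
      apply Real.log_le_log (by positivity)
      rw [div_le_div_iff₀ hm0 h1β]
      have : 0 ≤ β * p i := by positivity
      nlinarith
    calc q i * Real.log (q i / m) ≤ q i * Real.log (1 / (1 - β)) := by
          rcases le_or_gt 0 (Real.log (q i / m)) with h | h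
          · exact mul_le_mul_of_nonneg_left hlog hqi.le
          · nlinarith
      _ ≤ 1 * Real.log (1 / (1 - β)) := mul_le_mul_of_nonneg_right hq1i hL0
      _ = _ := one_mul _
end

section
/- For probability distributions p, q on a finite set with q strictly positive, β ∈ (0,1), m = βp+(1−β)q, and X_i = Σ_v q(v)(δ_{iv}−q(i))·log(q(v)/m(v)): |X_i| ≤ 2·log(1/(1−β)) for every i. -/
open Finset

theorem abs_X_le_two_log
    {V : Type*} [Fintype V] [DecidableEq V] (p q : V → ℝ) (β : ℝ)
    (hp0 : ∀ v, 0 ≤ p v) (hp1 : ∑ v, p v = 1)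
    (hq0 : ∀ v, 0 < q v) (hq1 : ∑ v, q v = 1)
    (hβ : β ∈ Set.Ioo (0 : ℝ) 1)
    (m : V → ℝ) (hm : ∀ v, m v = β * p v + (1 - β) * q v) (i : V) :
    |∑ v, q v * ((if i = v then (1 : ℝ) else 0) - q i) * Real.log (q v / m v)| ≤
      2 * Real.log (1 / (1 - β)) := by
  obtain ⟨hβ0, hβ1⟩ := hβ
  have h1β : (0:ℝ) < 1 - β := by linarith
  set L := Real.log (1 / (1 - β)) with hL
  have hL0 : 0 ≤ L := Real.log_nonneg (by rw [le_div_iff₀ h1β]; linarith)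
  have hβL : β ≤ L := by
    have := Real.log_le_sub_one_of_pos h1β
    have : Real.log (1 - β) ≤ -β := by linarith
    rw [hL, Real.log_div one_ne_zero (ne_of_gt h1β), Real.log_one]
    linarith
  have hm0 : ∀ v, 0 < m v := fun v => by
    rw [hm v]
    nlinarith [mul_pos h1β (hq0 v), mul_nonneg hβ0.le (hp0 v)]
  set f : V → ℝ := fun v => q v * Real.log (q v / m v) with hf
  -- log (q v / m v) ≤ L
  have hlogle : ∀ v, Real.log (q v / m v) ≤ L := by
    intro v
    rw [hL]
    apply Real.log_le_log (div_pos (hq0 v) (hm0 v))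
    rw [div_le_div_iff₀ (hm0 v) h1β, one_mul, hm v]
    have := hp0 v
    nlinarith [hq0 v]
  have hple1 : ∀ v, p v ≤ 1 := fun v => by
    rw [← hp1]
    exact Finset.single_le_sum (fun w _ => hp0 w) (mem_univ v)
  have hqle1 : ∀ v, q v ≤ 1 := fun v => by
    rw [← hq1]
    exact Finset.single_le_sum (fun w _ => (hq0 w).le) (mem_univ v)
  -- f v ≤ q v * L
  have hfle : ∀ v, f v ≤ q v * L := fun v =>
    mul_le_mul_of_nonneg_left (hlogle v) (hq0 v).le
  -- f v ≥ -β ≥ -L  (case split on sign of log)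
  have hfge : ∀ v, -L ≤ f v := by
    intro v
    rcases le_or_gt 0 (Real.log (q v / m v)) with h | h
    · have : 0 ≤ f v := mul_nonneg (hq0 v).le h
      linarith
    · have hml : Real.log (m v / q v) ≤ m v / q v - 1 :=
        Real.log_le_sub_one_of_pos (div_pos (hm0 v) (hq0 v))
      have heq : Real.log (m v / q v) = - Real.log (q v / m v) := by
        rw [Real.log_div (ne_of_gt (hm0 v)) (ne_of_gt (hq0 v)),
            Real.log_div (ne_of_gt (hq0 v)) (ne_of_gt (hm0 v))]
        ring
      have : -Real.log (q v / m v) ≤ m v / q v - 1 := heq ▸ hml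
      have h2 : q v * (-Real.log (q v / m v)) ≤ q v * (m v / q v - 1) :=
        mul_le_mul_of_nonneg_left this (hq0 v).le
      have h3 : q v * (m v / q v - 1) = m v - q v := by
        rw [mul_sub, mul_div_cancel₀ _ (hq0 v).ne', mul_one]
      have h4 : m v - q v ≤ β := by
        rw [hm v]
        nlinarith [mul_nonneg hβ0.le (hq0 v).le,
          mul_le_mul_of_nonneg_left (hple1 v) hβ0.le]
      have : q v * Real.log (q v / m v) ≥ -β := by nlinarith
      show -L ≤ q v * Real.log (q v / m v)
      linarith
  -- KL nonnegativity: 0 ≤ ∑ f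
  have hm1 : ∑ v, m v = 1 := by
    simp only [hm, Finset.sum_add_distrib, ← Finset.mul_sum, hp1, hq1]; ring
  have hD0 : 0 ≤ ∑ v, f v := by
    have h : ∀ v ∈ univ, q v - m v ≤ f v := by
      intro v _
      have hml : Real.log (m v / q v) ≤ m v / q v - 1 :=
        Real.log_le_sub_one_of_pos (div_pos (hm0 v) (hq0 v))
      have heq : Real.log (m v / q v) = - Real.log (q v / m v) := by
        rw [Real.log_div (ne_of_gt (hm0 v)) (ne_of_gt (hq0 v)),
            Real.log_div (ne_of_gt (hq0 v)) (ne_of_gt (hm0 v))]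
        ring
      have h2 : q v * (-Real.log (q v / m v)) ≤ q v * (m v / q v - 1) :=
        mul_le_mul_of_nonneg_left (heq ▸ hml) (hq0 v).le
      have h3 : q v * (m v / q v - 1) = m v - q v := by
        rw [mul_sub, mul_div_cancel₀ _ (hq0 v).ne', mul_one]
      show q v - m v ≤ q v * Real.log (q v / m v)
      nlinarith
    have := Finset.sum_le_sum h
    rw [Finset.sum_sub_distrib, hq1, hm1] at this
    linarith
  have hDL : ∑ v, f v ≤ L := by
    have := Finset.sum_le_sum (fun v (_ : v ∈ univ) => hfle v)
    rwa [← Finset.sum_mul, hq1, one_mul] at this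
  -- decomposition
  have hdecomp : ∑ v, q v * ((if i = v then (1:ℝ) else 0) - q i) * Real.log (q v / m v)
      = f i - q i * ∑ v, f v := by
    have : ∀ v, q v * ((if i = v then (1:ℝ) else 0) - q i) * Real.log (q v / m v)
        = (if i = v then f v else 0) - q i * f v := by
      intro v
      by_cases h : i = v <;> simp [h, hf] <;> ring
    simp_rw [this, Finset.sum_sub_distrib, Finset.sum_ite_eq, mem_univ, if_true,
      ← Finset.mul_sum]
  rw [hdecomp, abs_le]
  constructor
  · have h1 : q i * ∑ v, f v ≤ 1 * L :=
      mul_le_mul (hqle1 i) hDL hD0 zero_le_one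
    have h2 := hfge i
    linarith
  · have h1 : 0 ≤ q i * ∑ v, f v := mul_nonneg (hq0 i).le hD0
    have h2 : f i ≤ 1 * L := le_trans (hfle i)
      (mul_le_mul_of_nonneg_right (hqle1 i) hL0)
    linarith
end

section
/- Let p be a fixed probability distribution on a finite set V and q = softmax(z). For any β ∈ (0,1), the gradient of JSD_β(p‖q) with respect to the logits z satisfies ‖∇_z JSD_β(p‖q)‖_∞ ≤ 1/4 + 2/√e, uniformly in p, q, and β; in particular the bound is strictly less than 2. -/
/-!
Along a curve `q(t)` of positive vectors, the derivative of `JSD_β(p ‖ q)` collapses to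
`(1 - β) ∑ᵥ q'ᵥ ℓᵥ` with `ℓᵥ = log (qᵥ / mᵥ)` and `m = β p + (1 - β) q`: the terms coming from
differentiating the mixture `m` cancel coordinatewise. For `q = softmax z` moved along the `i`-th
logit, `q'ᵥ = qᵥ (δᵥᵢ - qᵢ)`, so the derivative is `(1 - β) qᵢ (ℓᵢ - KL(q ‖ m))`.
Now `qᵥ / mᵥ ≤ 1 / (1 - β)` and `mᵢ ≤ 1` give `qᵢ ℓᵢ ∈ [-1/e, -log (1 - β)]`, Gibbs' inequality
gives `KL(q ‖ m) ∈ [0, -log (1 - β)]`, and `(1 - β) (-log (1 - β)) ≤ 1/e`. Hence the derivative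
is at most `2/e ≤ 2/√e` in absolute value.
-/

open Finset

noncomputable def softmax {V : Type*} [Fintype V] (z : V → ℝ) (v : V) : ℝ :=
  Real.exp (z v) / ∑ w, Real.exp (z w)

open Real

lemma neg_inv_exp_one_le_mul_log {x : ℝ} (hx : 0 < x) : -(exp 1)⁻¹ ≤ x * log x := by
  have h := log_le_sub_one_of_pos (show 0 < (exp 1 * x)⁻¹ by positivity)
  rw [log_inv, log_mul (exp_pos 1).ne' hx.ne', log_exp] at h
  have hx' : x * (exp 1 * x)⁻¹ = (exp 1)⁻¹ := by field_simp
  nlinarith [mul_le_mul_of_nonneg_left h hx.le]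

lemma sub_le_mul_log_div {x y : ℝ} (hx : 0 < x) (hy : 0 < y) : x - y ≤ x * log (x / y) := by
  have h := one_sub_inv_le_log_of_pos (div_pos hx hy)
  rw [inv_div] at h
  calc x - y = x * (1 - y / x) := by field_simp
    _ ≤ x * log (x / y) := mul_le_mul_of_nonneg_left h hx.le

lemma two_div_exp_one_le_two_div_sqrt_exp_one : 2 / exp 1 ≤ 2 / √(exp 1) := by
  rw [← exp_half]
  gcongr
  norm_num

lemma one_quarter_add_two_div_sqrt_exp_one_lt_two : 1 / 4 + 2 / √(exp 1) < 2 := by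
  have h : 3 / 2 ≤ √(exp 1) := by
    rw [← exp_half]
    linarith [add_one_le_exp (1 / 2)]
  have : 2 / √(exp 1) ≤ 2 / (3 / 2) := by gcongr
  linarith

section Derivatives

variable {f g : ℝ → ℝ} {f' g' t : ℝ}

theorem HasDerivAt.mul_log_div (hf : HasDerivAt f f' t) (hg : HasDerivAt g g' t)
    (hft : f t ≠ 0) (hgt : g t ≠ 0) :
    HasDerivAt (fun s => f s * Real.log (f s / g s))
      (f' * Real.log (f t / g t) + f' - f t * g' / g t) t := by
  refine (hf.mul ((hf.div hg hgt).log (div_ne_zero hft hgt))).congr_deriv ?_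
  simp only [Pi.div_apply]
  field_simp
  ring

theorem HasDerivAt.const_mul_log_const_div (a : ℝ) (hg : HasDerivAt g g' t) (hgt : g t ≠ 0) :
    HasDerivAt (fun s => a * Real.log (a / g s)) (-(a * g' / g t)) t := by
  rcases eq_or_ne a 0 with rfl | ha
  · simpa using hasDerivAt_const t (0 : ℝ)
  · simpa using (hasDerivAt_const t a).mul_log_div hg ha hgt

end Derivatives

section SkewJSD

variable {V : Type*}

def mixture (β : ℝ) (p q : V → ℝ) (v : V) : ℝ := β * p v + (1 - β) * q v

variable {β : ℝ} {p q : V → ℝ}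

lemma mixture_pos (hβ0 : 0 ≤ β) (hβ1 : β < 1) {v : V} (hp : 0 ≤ p v) (hq : 0 < q v) :
    0 < mixture β p q v := by
  unfold mixture
  have : 0 < 1 - β := by linarith
  positivity

lemma mixture_le_one (hβ0 : 0 ≤ β) (hβ1 : β ≤ 1) {v : V} (hp : p v ≤ 1) (hq : q v ≤ 1) :
    mixture β p q v ≤ 1 := by
  unfold mixture
  nlinarith

lemma log_div_mixture_le (hβ0 : 0 ≤ β) (hβ1 : β < 1) {v : V} (hp : 0 ≤ p v) (hq : 0 < q v) :
    log (q v / mixture β p q v) ≤ -log (1 - β) := by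
  have hm := mixture_pos hβ0 hβ1 hp hq
  rw [← log_inv]
  refine log_le_log (div_pos hq hm) ?_
  rw [div_le_iff₀ hm, inv_mul_eq_div, le_div_iff₀ (by linarith), mixture]
  nlinarith [mul_nonneg hβ0 hp]

variable [Fintype V]

noncomputable def skewJSD (β : ℝ) (p q : V → ℝ) : ℝ :=
  β * ∑ v, p v * log (p v / mixture β p q v) +
    (1 - β) * ∑ v, q v * log (q v / mixture β p q v)

lemma sum_mixture (hp : ∑ v, p v = 1) (hq : ∑ v, q v = 1) : ∑ v, mixture β p q v = 1 := by
  simp only [mixture, sum_add_distrib, ← mul_sum, hp, hq]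
  ring

lemma sum_mul_log_div_mixture_nonneg (hβ0 : 0 ≤ β) (hβ1 : β < 1) (hp0 : ∀ v, 0 ≤ p v)
    (hp1 : ∑ v, p v = 1) (hq0 : ∀ v, 0 < q v) (hq1 : ∑ v, q v = 1) :
    0 ≤ ∑ v, q v * log (q v / mixture β p q v) :=
  calc 0 = ∑ v, (q v - mixture β p q v) := by
        rw [sum_sub_distrib, hq1, sum_mixture hp1 hq1, sub_self]
    _ ≤ _ := sum_le_sum fun v _ =>
        sub_le_mul_log_div (hq0 v) (mixture_pos hβ0 hβ1 (hp0 v) (hq0 v))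

lemma hasDerivAt_skewJSD (hβ0 : 0 ≤ β) (hβ1 : β < 1) (hp : ∀ v, 0 ≤ p v) {q : ℝ → V → ℝ}
    {q' : V → ℝ} {t : ℝ} (hq : ∀ v, HasDerivAt (q · v) (q' v) t) (hqt : ∀ v, 0 < q t v) :
    HasDerivAt (fun s => skewJSD β p (q s))
      ((1 - β) * ∑ v, q' v * log (q t v / mixture β p (q t) v)) t := by
  have hm (v : V) : HasDerivAt (fun s => mixture β p (q s) v) ((1 - β) * q' v) t :=
    ((hq v).const_mul (1 - β)).const_add (β * p v)
  have hm0 (v : V) : mixture β p (q t) v ≠ 0 := (mixture_pos hβ0 hβ1 (hp v) (hqt v)).ne'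
  have hp_terms := HasDerivAt.fun_sum fun v (_ : v ∈ univ) =>
    (hm v).const_mul_log_const_div (p v) (hm0 v)
  have hq_terms := HasDerivAt.fun_sum fun v (_ : v ∈ univ) =>
    (hq v).mul_log_div (hm v) (hqt v).ne' (hm0 v)
  refine ((hp_terms.const_mul β).add (hq_terms.const_mul (1 - β))).congr_deriv ?_
  rw [mul_sum, mul_sum, mul_sum, ← sum_add_distrib]
  refine sum_congr rfl fun v _ => ?_
  have hmv := hm0 v
  unfold mixture at hmv ⊢
  field_simp
  ring

lemma sum_mul_single_sub_mul [DecidableEq V] (q ℓ : V → ℝ) (i : V) :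
    ∑ v, q v * ((Pi.single i 1 : V → ℝ) v - q i) * ℓ v = q i * (ℓ i - ∑ v, q v * ℓ v) := by
  simp only [mul_sub, sub_mul, sum_sub_distrib, Pi.single_apply, mul_ite, ite_mul, mul_one,
    mul_zero, zero_mul, sum_ite_eq', mem_univ, if_true, mul_sum]
  exact congrArg _ (sum_congr rfl fun v _ => by ring)

lemma abs_mul_log_div_mixture_sub_le (hβ0 : 0 ≤ β) (hβ1 : β < 1) (hp0 : ∀ v, 0 ≤ p v)
    (hp1 : ∑ v, p v = 1) (hq0 : ∀ v, 0 < q v) (hq1 : ∑ v, q v = 1) (i : V) :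
    |(1 - β) * (q i * (log (q i / mixture β p q i) - ∑ v, q v * log (q v / mixture β p q v)))|
      ≤ 2 / exp 1 := by
  set L := -log (1 - β)
  set K := ∑ v, q v * log (q v / mixture β p q v)
  have hβ : 0 < 1 - β := by linarith
  have hL0 : 0 ≤ L := neg_nonneg.2 (log_nonpos hβ.le (by linarith))
  have hβL : (1 - β) * L ≤ (exp 1)⁻¹ := by
    linarith [neg_inv_exp_one_le_mul_log hβ, mul_neg (1 - β) (log (1 - β))]
  have hℓ (v : V) : log (q v / mixture β p q v) ≤ L := log_div_mixture_le hβ0 hβ1 (hp0 v) (hq0 v)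
  have hK0 : 0 ≤ K := sum_mul_log_div_mixture_nonneg hβ0 hβ1 hp0 hp1 hq0 hq1
  have hKL : K ≤ L :=
    calc K ≤ ∑ v, q v * L := sum_le_sum fun v _ => mul_le_mul_of_nonneg_left (hℓ v) (hq0 v).le
      _ = L := by rw [← sum_mul, hq1, one_mul]
  have hqi : q i ≤ 1 := hq1 ▸ single_le_sum (fun v _ => (hq0 v).le) (mem_univ i)
  have hpi : p i ≤ 1 := hp1 ▸ single_le_sum (fun v _ => hp0 v) (mem_univ i)
  have hℓi : -(exp 1)⁻¹ ≤ q i * log (q i / mixture β p q i) :=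
    calc -(exp 1)⁻¹ ≤ q i * log (q i) := neg_inv_exp_one_le_mul_log (hq0 i)
      _ ≤ q i * log (q i / mixture β p q i) := by
        have hm := mixture_pos hβ0 hβ1 (hp0 i) (hq0 i)
        refine mul_le_mul_of_nonneg_left (log_le_log (hq0 i) ?_) (hq0 i).le
        exact le_div_self (hq0 i).le hm (mixture_le_one hβ0 hβ1.le hpi hqi)
  have he : 0 < (exp 1)⁻¹ := by positivity
  rw [abs_le, div_eq_mul_inv]
  constructor
  · nlinarith [mul_le_mul_of_nonneg_left hqi hK0, mul_le_mul_of_nonneg_left hℓi hβ.le,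
      mul_le_mul_of_nonneg_left hKL hβ.le]
  · nlinarith [mul_le_mul_of_nonneg_left (hℓ i) (hq0 i).le, mul_le_mul_of_nonneg_right hqi hL0,
      mul_nonneg (hq0 i).le hK0]

end SkewJSD

section Softmax

variable {V : Type*} [Fintype V]

lemma softmax_pos (z : V → ℝ) (v : V) : 0 < softmax z v :=
  div_pos (exp_pos _) (sum_pos (fun _ _ => exp_pos _) ⟨v, mem_univ v⟩)

lemma sum_softmax [Nonempty V] (z : V → ℝ) : ∑ v, softmax z v = 1 := by
  simp only [softmax, ← sum_div]
  exact div_self (sum_pos (fun _ _ => exp_pos _) univ_nonempty).ne'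

lemma hasDerivAt_softmax {z : ℝ → V → ℝ} {z' : V → ℝ} {t : ℝ}
    (hz : ∀ v, HasDerivAt (z · v) (z' v) t) (v : V) :
    HasDerivAt (fun s => softmax (z s) v)
      (softmax (z t) v * (z' v - ∑ w, softmax (z t) w * z' w)) t := by
  have hS : 0 < ∑ w, exp (z t w) := sum_pos (fun _ _ => exp_pos _) ⟨v, mem_univ v⟩
  refine ((hz v).exp.div (HasDerivAt.fun_sum fun w _ => (hz w).exp) hS.ne').congr_deriv ?_
  simp only [softmax, ← sum_div, div_mul_eq_mul_div]
  field_simp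

lemma hasDerivAt_softmax_update [DecidableEq V] (z : V → ℝ) (i v : V) :
    HasDerivAt (fun t => softmax (Function.update z i t) v)
      (softmax z v * ((Pi.single i 1 : V → ℝ) v - softmax z i)) (z i) := by
  have h := hasDerivAt_softmax (hasDerivAt_pi.1 (hasDerivAt_update z i (z i))) v
  simpa [Function.update_eq_self, Pi.single_apply] using h

end Softmax

/-- The logit gradient of `JSD_β(p ‖ softmax z)` is uniformly bounded by
`1/4 + 2/√e < 2`, for every coordinate `i`, every fixed probability
distribution `p`, every logit vector `z`, and every `β ∈ (0,1)`. -/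
theorem jsd_logit_gradient_bound
    {V : Type*} [Fintype V] [DecidableEq V] (p : V → ℝ) (z : V → ℝ) (β : ℝ) (i : V)
    (hp0 : ∀ v, 0 ≤ p v) (hp1 : ∑ v, p v = 1)
    (hβ : β ∈ Set.Ioo (0 : ℝ) 1) :
    (∀ d : ℝ,
      HasDerivAt
        (fun t : ℝ =>
          β * ∑ v, p v * Real.log (p v /
              (β * p v + (1 - β) * softmax (Function.update z i t) v)) +
          (1 - β) * ∑ v, softmax (Function.update z i t) v *
              Real.log (softmax (Function.update z i t) v /
                (β * p v + (1 - β) * softmax (Function.update z i t) v)))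
        d (z i) →
      |d| ≤ 1 / 4 + 2 / Real.sqrt (Real.exp 1)) ∧
    1 / 4 + 2 / Real.sqrt (Real.exp 1) < 2 := by
  obtain ⟨hβ0, hβ1⟩ := hβ
  refine ⟨fun d hd => ?_, one_quarter_add_two_div_sqrt_exp_one_lt_two⟩
  have hJSD := hasDerivAt_skewJSD hβ0.le hβ1 hp0 (hasDerivAt_softmax_update z i) (softmax_pos _)
  rw [Function.update_eq_self] at hJSD
  have : Nonempty V := ⟨i⟩
  calc |d| = _ := by rw [hd.unique hJSD, sum_mul_single_sub_mul]
    _ ≤ 2 / exp 1 :=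
      abs_mul_log_div_mixture_sub_le hβ0.le hβ1 hp0 hp1 (softmax_pos z) (sum_softmax z) i
    _ ≤ 1 / 4 + 2 / √(exp 1) := by linarith [two_div_exp_one_le_two_div_sqrt_exp_one]
end
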